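/- arXiv:1304.7394 — 3 statements merged into one kernel-verified Lean document; each statement's English description precedes it below -/
import Mathlib

section
/- The metric space (T↓, d_U) is complete: every Cauchy sequence in T↓ converges with respect to d_U. -/
open scoped Classical

namespace CSPLL

variable {E : Type*}

/-- Events: `none` is the termination signal ✓, `some a` is a visible event. -/
abbrev Ev (E : Type*) := Option E

/-- A member of `Σ^{*✓}`: the termination event ✓ may occur only as the last element. -/
def ValidTrace (s : List (Ev E)) : Prop := (none : Ev E) ∉ s.dropLast

/-- The semantic domain `T↓`: pairs `(T, D)` of (behavioural) traces and divergences
satisfying the axioms of the divergence-strict traces model. -/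
structure TD (E : Type*) where
  T : Set (List (Ev E))
  D : Set (List (Ev E))
  valid : ∀ s ∈ T, ValidTrace s
  d_sub : D ⊆ T
  nonempty : [] ∈ T
  prefix_closed : ∀ s t : List (Ev E), s ++ t ∈ T → s ∈ T
  tick_div : ∀ s : List (Ev E), s ++ [none] ∈ D → s ∈ D
  div_ext : ∀ s t : List (Ev E), s ∈ D → (none : Ev E) ∉ s → ValidTrace t → s ++ t ∈ D

/-- Raw trace/divergence pairs. -/
abbrev Pair (E : Type*) := Set (List (Ev E)) × Set (List (Ev E))

def TD.pair (P : TD E) : Pair E := (P.T, P.D)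

/-- `lengthU U s` counts the occurrences of events from `U` in the trace `s`. -/
noncomputable def lengthU (U : Set E) (s : List (Ev E)) : ℕ :=
  (s.filter fun x => decide (∃ a ∈ U, x = some a)).length

/-- Restriction `(T,D) ↾_U n` of a trace/divergence pair to `U`-length `n`. -/
noncomputable def restrict (U : Set E) (n : ℕ) (P : Pair E) : Pair E :=
  let D' := P.2 ∪ {u | ∃ s t, s ∈ P.1 ∧ (none : Ev E) ∉ s ∧ lengthU U s = n ∧
                       ValidTrace t ∧ u = s ++ t}
  (D' ∪ {s ∈ P.1 | lengthU U s ≤ n}, D')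

/-- The metric `d_U(P,Q) = inf {2^{-n} | P ↾_U n = Q ↾_U n}` (taken in `[0,1]`). -/
noncomputable def dU (U : Set E) (P Q : Pair E) : ℝ :=
  sInf {x : ℝ | ∃ n : ℕ, restrict U n P = restrict U n Q ∧ x = (1 / 2 : ℝ) ^ n}

noncomputable def dTD (U : Set E) (P Q : TD E) : ℝ := dU U P.pair Q.pair

/-!
Being at distance `< 2⁻ᵏ` means having the same traces and divergences of `U`-length at most `k`;
conversely such agreement forces equal restrictions at level `k`, because every divergence of
`U`-length above `k` extends, by prefix closure, a trace of `U`-length exactly `k`. Along a Cauchy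
sequence every short trace is therefore eventually always in, or always out of, each component,
so the limit is the pair of eventually present traces and divergences: the axioms of `T↓` pass to
it pointwise, and it agrees with the sequence up to any `U`-length from some index on.
-/

open Filter

lemma lengthU_append (U : Set E) (s t : List (Ev E)) :
    lengthU U (s ++ t) = lengthU U s + lengthU U t := by
  simp [lengthU, List.filter_append]

lemma lengthU_singleton_le (U : Set E) (x : Ev E) : lengthU U [x] ≤ 1 := by
  simp only [lengthU, List.filter_singleton]
  cases decide (∃ a ∈ U, x = some a) <;> simp

lemma validTrace_append_iff {s t : List (Ev E)} (ht : t ≠ []) :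
    ValidTrace (s ++ t) ↔ (none : Ev E) ∉ s ∧ ValidTrace t := by
  simp [ValidTrace, List.dropLast_append_of_ne_nil ht, not_or]

lemma validTrace_append {s t : List (Ev E)} (hs : (none : Ev E) ∉ s) (ht : ValidTrace t) :
    ValidTrace (s ++ t) := by
  rcases eq_or_ne t [] with rfl | ht'
  · simpa [ValidTrace] using fun h => hs ((List.dropLast_sublist s).mem h)
  · exact (validTrace_append_iff ht').2 ⟨hs, ht⟩

lemma exists_append_lengthU_eq (U : Set E) {d : List (Ev E)} {k : ℕ} (hk : k < lengthU U d) :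
    ∃ u t, d = u ++ t ∧ lengthU U u = k ∧ t ≠ [] := by
  induction d generalizing k with
  | nil => simp [lengthU] at hk
  | cons x d ih =>
    cases k with
    | zero => exact ⟨[], x :: d, rfl, rfl, List.cons_ne_nil x d⟩
    | succ k =>
      have hx := lengthU_singleton_le U x
      have hxd : lengthU U (x :: d) = lengthU U [x] + lengthU U d := lengthU_append U [x] d
      obtain ⟨u, t, rfl, hu, ht⟩ := ih (k := k + 1 - lengthU U [x]) (by omega)
      refine ⟨x :: u, t, rfl, ?_, ht⟩
      rw [← List.singleton_append, lengthU_append]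
      omega

section Restrict

variable {U : Set E} {k n : ℕ} {P Q : TD E}

lemma mem_restrict_snd_iff {R : Pair E} {s : List (Ev E)} (hs : lengthU U s < n) :
    s ∈ (restrict U n R).2 ↔ s ∈ R.2 := by
  refine ⟨?_, Or.inl⟩
  rintro (h | ⟨u, t, -, -, hu, -, rfl⟩)
  · exact h
  · rw [lengthU_append] at hs
    omega

lemma mem_restrict_fst_iff {s : List (Ev E)} (hs : lengthU U s < n) :
    s ∈ (restrict U n P.pair).1 ↔ s ∈ P.T := by
  refine ⟨?_, fun h => Or.inr ⟨h, hs.le⟩⟩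
  rintro (h | ⟨h, -⟩)
  · exact P.d_sub ((mem_restrict_snd_iff hs).1 h)
  · exact h

lemma restrict_zero_pair (U : Set E) (P : TD E) :
    restrict U 0 P.pair = ({s | ValidTrace s}, {s | ValidTrace s}) := by
  have hD : (restrict U 0 P.pair).2 = {s | ValidTrace s} := by
    ext u
    refine ⟨?_, fun hu => Or.inr ⟨[], u, P.nonempty, List.not_mem_nil, rfl, hu, rfl⟩⟩
    rintro (hu | ⟨s, t, -, hs, -, ht, rfl⟩)
    · exact P.valid u (P.d_sub hu)
    · exact validTrace_append hs ht
  refine Prod.ext ?_ hD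
  change (restrict U 0 P.pair).2 ∪ {s ∈ P.T | lengthU U s ≤ 0} = _
  rw [hD]
  exact Set.union_eq_self_of_subset_right fun s hs => P.valid s hs.1

def AgreeUpTo (U : Set E) (k : ℕ) (P Q : TD E) : Prop :=
  ∀ s, lengthU U s ≤ k → (s ∈ P.T ↔ s ∈ Q.T) ∧ (s ∈ P.D ↔ s ∈ Q.D)

lemma AgreeUpTo.symm (h : AgreeUpTo U k P Q) : AgreeUpTo U k Q P :=
  fun s hs => ⟨(h s hs).1.symm, (h s hs).2.symm⟩

lemma AgreeUpTo.restrict_snd_subset (h : AgreeUpTo U k P Q) :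
    (restrict U k P.pair).2 ⊆ (restrict U k Q.pair).2 := by
  rintro d (hd | ⟨u, t, hu, hnu, hlen, ht, rfl⟩)
  · by_cases hlen : lengthU U d ≤ k
    · exact Or.inl ((h d hlen).2.1 hd)
    obtain ⟨u, t, rfl, hu, htne⟩ := exists_append_lengthU_eq U (not_le.1 hlen)
    obtain ⟨hnu, ht⟩ := (validTrace_append_iff htne).1 (P.valid _ (P.d_sub hd))
    have huT : u ∈ Q.T := (h u hu.le).1.1 (P.prefix_closed u t (P.d_sub hd))
    exact Or.inr ⟨u, t, huT, hnu, hu, ht, rfl⟩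
  · exact Or.inr ⟨u, t, (h u hlen.le).1.1 hu, hnu, hlen, ht, rfl⟩

lemma AgreeUpTo.restrict_eq (h : AgreeUpTo U k P Q) :
    restrict U k P.pair = restrict U k Q.pair := by
  have hD := h.restrict_snd_subset.antisymm h.symm.restrict_snd_subset
  have hT : {s ∈ P.T | lengthU U s ≤ k} = {s ∈ Q.T | lengthU U s ≤ k} := by
    ext s
    exact and_congr_left fun hs => (h s hs).1
  refine Prod.ext ?_ hD
  change (restrict U k P.pair).2 ∪ {s ∈ P.T | lengthU U s ≤ k} =
    (restrict U k Q.pair).2 ∪ {s ∈ Q.T | lengthU U s ≤ k}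
  rw [hD, hT]

lemma agreeUpTo_of_restrict_eq (h : restrict U n P.pair = restrict U n Q.pair) (hk : k < n) :
    AgreeUpTo U k P Q := fun s hs => by
  have hsn := hs.trans_lt hk
  refine ⟨?_, ?_⟩
  · rw [← mem_restrict_fst_iff hsn, h, mem_restrict_fst_iff hsn]
  · change s ∈ P.pair.2 ↔ s ∈ Q.pair.2
    rw [← mem_restrict_snd_iff hsn, h, mem_restrict_snd_iff hsn]

lemma dTD_le_of_agreeUpTo (h : AgreeUpTo U k P Q) : dTD U P Q ≤ (1 / 2 : ℝ) ^ k :=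
  csInf_le ⟨0, by rintro x ⟨n, -, rfl⟩; positivity⟩ ⟨k, h.restrict_eq, rfl⟩

lemma agreeUpTo_of_dTD_lt (h : dTD U P Q < (1 / 2 : ℝ) ^ k) : AgreeUpTo U k P Q := by
  have hne : {x : ℝ | ∃ n : ℕ, restrict U n P.pair = restrict U n Q.pair ∧
      x = (1 / 2 : ℝ) ^ n}.Nonempty :=
    ⟨1, 0, by rw [restrict_zero_pair, restrict_zero_pair], by norm_num⟩
  obtain ⟨-, ⟨n, hn, rfl⟩, hlt⟩ := exists_lt_of_csInf_lt hne h
  exact agreeUpTo_of_restrict_eq hn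
    ((pow_lt_pow_iff_right_of_lt_one₀ (by norm_num) (by norm_num)).1 hlt)

end Restrict

/-- In the refinement order (reverse inclusion) this is `⊓_q ⊔_{r ≥ q} f r`. -/
def TD.liminf (f : ℕ → TD E) : TD E where
  T := {s | ∀ᶠ m in atTop, s ∈ (f m).T}
  D := {s | ∀ᶠ m in atTop, s ∈ (f m).D}
  valid s hs := let ⟨m, hm⟩ := hs.exists; (f m).valid s hm
  d_sub _ hs := hs.mono fun m h => (f m).d_sub h
  nonempty := Eventually.of_forall fun m => (f m).nonempty
  prefix_closed s t hs := hs.mono fun m => (f m).prefix_closed s t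
  tick_div s hs := hs.mono fun m => (f m).tick_div s
  div_ext s t hs hns ht := hs.mono fun m hm => (f m).div_ext s t hm hns ht

lemma agreeUpTo_liminf {U : Set E} {k M n : ℕ} {f : ℕ → TD E}
    (hM : ∀ i ≥ M, ∀ j ≥ M, AgreeUpTo U k (f i) (f j)) (hn : M ≤ n) :
    AgreeUpTo U k (f n) (TD.liminf f) := fun s hs => by
  have hev : ∀ᶠ m in atTop, AgreeUpTo U k (f m) (f n) :=
    eventually_atTop.2 ⟨M, fun m hm => hM m hm n hn⟩
  exact ⟨((eventually_congr (hev.mono fun m hm => (hm s hs).1)).trans eventually_const).symm,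
    ((eventually_congr (hev.mono fun m hm => (hm s hs).2)).trans eventually_const).symm⟩

/-- The metric space `(T↓, d_U)` is complete: every Cauchy sequence converges. -/
theorem dU_complete (U : Set E) (f : ℕ → TD E)
    (hCauchy : ∀ ε : ℝ, 0 < ε → ∃ N : ℕ, ∀ m ≥ N, ∀ n ≥ N, dTD U (f m) (f n) < ε) :
    ∃ P : TD E, ∀ ε : ℝ, 0 < ε → ∃ N : ℕ, ∀ n ≥ N, dTD U (f n) P < ε := by
  have hAgree : ∀ k, ∃ M, ∀ m ≥ M, ∀ n ≥ M, AgreeUpTo U k (f m) (f n) := fun k =>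
    (hCauchy _ (by positivity)).imp fun _ hM m hm n hn => agreeUpTo_of_dTD_lt (hM m hm n hn)
  choose M hM using hAgree
  refine ⟨TD.liminf f, fun ε hε => ?_⟩
  obtain ⟨k, hk⟩ := exists_pow_lt_of_lt_one hε (by norm_num : (1 / 2 : ℝ) < 1)
  exact ⟨M k, fun n hn => (dTD_le_of_agreeUpTo (agreeUpTo_liminf (hM k) hn)).trans_lt hk⟩

end CSPLL
end

section
/- Every infinite trace of a sequential composition P ; Q either is an infinite trace of P, or decomposes as t⌢u' where t⌢⟨✓⟩ is a terminating trace of P and u' is an infinite trace of Q. -/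
open scoped Classical

namespace CSPLL

variable {E : Type*}

/-- The length-`n` prefix of an infinite word. -/
def pref (u : ℕ → E) (n : ℕ) : List E := (List.range n).map u

/-- `u ∈ traces^ω(T)`: every finite prefix of `u` lies in `T`. -/
def InfTrace (T : Set (List E)) (u : ℕ → E) : Prop := ∀ n, pref u n ∈ T

def PrefixClosed (T : Set (List E)) : Prop := ∀ s t : List E, s ++ t ∈ T → s ∈ T

/-- The length-`n` prefix of an infinite (tick-free) word, as a trace in `Σ^{*✓}`. -/
def prefO (u : ℕ → E) (n : ℕ) : List (Option E) :=
  (List.range n).map fun i => (some (u i) : Option E)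

/-- Infinite traces of a trace set over `Σ^{*✓}`. -/
def InfTraceO (T : Set (List (Option E))) (u : ℕ → E) : Prop := ∀ n, prefO u n ∈ T

/-- `traces(P ; Q) = (traces(P) ∩ Σ*) ∪ {t⌢s | t⌢⟨✓⟩ ∈ traces(P), s ∈ traces(Q)}`,
where `none` plays the role of ✓. -/
def seqTraces (TP TQ : Set (List (Option E))) : Set (List (Option E)) :=
  {s ∈ TP | (none : Option E) ∉ s} ∪
    {x | ∃ t s, t ++ [(none : Option E)] ∈ TP ∧ s ∈ TQ ∧ x = t ++ s}

/-!
If `u` is not an infinite trace of `P`, some prefix `u↾N` is not a trace of `P`. By prefix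
closure of `traces(P)`, each longer prefix `u↾(N+m)` can then be a trace of `P ; Q` only as
`t ⌢ s` with `t ⌢ ⟨✓⟩ ∈ traces(P)` and `|t| < N`, and `s` covers the next `m` letters after `t`.
There are finitely many split points `|t| < N`, and by prefix closure of `traces(Q)` the
condition on each of them is downward closed in `m`, so a single split point serves for all `m`.
-/

theorem exists_lt_forall_of_forall_exists_lt {p : ℕ → ℕ → Prop} {N : ℕ}
    (hp : ∀ k m m', m ≤ m' → p k m' → p k m) (h : ∀ m, ∃ k < N, p k m) :
    ∃ k < N, ∀ m, p k m := by
  by_contra! hne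
  have hev : ∀ᶠ m in Filter.atTop, ∀ k ∈ Set.Iio N, ¬ p k m := by
    refine (Filter.eventually_all_finite (Set.finite_Iio N)).2 fun k hk => ?_
    obtain ⟨m₀, hm₀⟩ := hne k hk
    exact Filter.eventually_atTop.2 ⟨m₀, fun m hm hpm => hm₀ (hp k m₀ m hm hpm)⟩
  obtain ⟨m, hm⟩ := hev.exists
  obtain ⟨k, hk, hpk⟩ := h m
  exact hm k hk hpk

@[simp]
theorem prefO_length (u : ℕ → E) (n : ℕ) : (prefO u n).length = n := by
  simp [prefO]

theorem pref_map_some (u : ℕ → E) (n : ℕ) : (pref u n).map some = prefO u n := by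
  simp [pref, prefO]

theorem prefO_add (u : ℕ → E) (k n : ℕ) :
    prefO u (k + n) = prefO u k ++ prefO (fun i => u (k + i)) n := by
  simp [prefO, List.range_add]

theorem prefO_eq_append {u : ℕ → E} {n : ℕ} {t s : List (Option E)} (h : prefO u n = t ++ s) :
    t = prefO u t.length ∧ s = prefO (fun i => u (t.length + i)) s.length := by
  obtain rfl : n = t.length + s.length := by simpa using congrArg List.length h
  rw [prefO_add] at h
  obtain ⟨ht, hs⟩ := List.append_inj h (by simp)
  exact ⟨ht.symm, hs.symm⟩

theorem prefO_mem_of_le {T : Set (List (Option E))} (hT : PrefixClosed T) {u : ℕ → E}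
    {k n : ℕ} (hkn : k ≤ n) (h : prefO u n ∈ T) : prefO u k ∈ T := by
  obtain ⟨d, rfl⟩ := Nat.exists_eq_add_of_le hkn
  rw [prefO_add] at h
  exact hT _ _ h

theorem exists_tick_lt_of_prefO_not_mem {TP TQ : Set (List (Option E))}
    (hP : PrefixClosed TP) (hQ : PrefixClosed TQ) {u : ℕ → E}
    (hu : InfTraceO (seqTraces TP TQ) u) {N : ℕ} (hN : prefO u N ∉ TP) (m : ℕ) :
    ∃ k < N, prefO u k ++ [none] ∈ TP ∧ prefO (fun i => u (k + i)) m ∈ TQ := by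
  rcases hu (N + m) with ⟨hmem, -⟩ | ⟨t, s, ht, hs, heq⟩
  · exact absurd (prefO_mem_of_le hP (Nat.le_add_right N m) hmem) hN
  obtain ⟨htu, hsu⟩ := prefO_eq_append heq
  have hlen : t.length + s.length = N + m := by simpa using (congrArg List.length heq).symm
  rw [htu] at ht
  rw [hsu] at hs
  have hkN : t.length < N := by
    by_contra! hle
    exact hN (prefO_mem_of_le hP hle (hP _ _ ht))
  exact ⟨t.length, hkN, ht, prefO_mem_of_le hQ (by omega) hs⟩

theorem inft_seq_general (TP TQ : Set (List (Option E)))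
    (hP : ∀ s t : List (Option E), s ++ t ∈ TP → s ∈ TP)
    (hQ : ∀ s t : List (Option E), s ++ t ∈ TQ → s ∈ TQ)
    (u : ℕ → E) (hu : InfTraceO (seqTraces TP TQ) u) :
    InfTraceO TP u ∨
      ∃ (t : List E) (u' : ℕ → E),
        t.map (fun a => (some a : Option E)) ++ [(none : Option E)] ∈ TP ∧
        InfTraceO TQ u' ∧ (∀ i : Fin t.length, u i = t.get i) ∧
        ∀ n, u (t.length + n) = u' n := by
  refine or_iff_not_imp_left.2 fun hPu => ?_
  obtain ⟨N, hN⟩ : ∃ N, prefO u N ∉ TP := by simpa [InfTraceO] using hPu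
  obtain ⟨k, -, hk⟩ := exists_lt_forall_of_forall_exists_lt
    (fun k m m' hle h => ⟨h.1, prefO_mem_of_le hQ hle h.2⟩)
    (exists_tick_lt_of_prefO_not_mem hP hQ hu hN)
  refine ⟨pref u k, fun i => u (k + i), ?_, fun m => (hk m).2, ?_, ?_⟩
  · rw [pref_map_some]
    exact (hk 0).1
  · rintro ⟨i, hi⟩
    simp [pref]
  · intro n
    simp [pref]

/-- Every infinite trace of a sequential composition `P ; Q` either is an
infinite trace of `P`, or decomposes as `t⌢u'` where `t⌢⟨✓⟩` is a terminating
trace of `P` and `u'` is an infinite trace of `Q`. -/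
theorem inft_seq [Fintype E] (TP TQ : Set (List (Option E)))
    (hP : ∀ s t : List (Option E), s ++ t ∈ TP → s ∈ TP)
    (hQ : ∀ s t : List (Option E), s ++ t ∈ TQ → s ∈ TQ)
    (u : ℕ → E) (hu : InfTraceO (seqTraces TP TQ) u) :
    InfTraceO TP u ∨
      ∃ (t : List E) (u' : ℕ → E),
        t.map (fun a => (some a : Option E)) ++ [(none : Option E)] ∈ TP ∧
        InfTraceO TQ u' ∧ (∀ i : Fin t.length, u i = t.get i) ∧
        ∀ n, u (t.length + n) = u' n :=
  inft_seq_general TP TQ hP hQ u hu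

end CSPLL
end

section
/- Every infinite trace of a renamed process lifts along the renaming relation: if u ∈ traces^ω(P[R]) then there exists v ∈ traces^ω(P) with v R u (pointwise relatedness of equal-length words). -/
open scoped Classical

namespace CSPLL

variable {E : Type*}

/-!
König's lemma in its compactness form: with `E` finite and discrete, `ℕ → E` is compact, and
the sets `{v | pref v n ∈ T}` of a prefix-closed `T` containing words of every length form a
decreasing sequence of nonempty closed sets (each depends on finitely many coordinates only),
so they share a point. Applied to the tree of `R`-preimages of the prefixes of `u` in `TP`,
this point is the required lift.
-/

variable {F : Type*}

@[simp]
lemma length_pref (u : ℕ → E) (n : ℕ) : (pref u n).length = n := by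
  simp [pref]

lemma pref_succ (u : ℕ → E) (n : ℕ) : pref u (n + 1) = pref u n ++ [u n] := by
  simp [pref, List.range_succ]

lemma pref_eq_ofFn (u : ℕ → E) (n : ℕ) : pref u n = List.ofFn fun i : Fin n => u i := by
  apply List.ext_getElem <;> simp [pref]

lemma take_pref (u : ℕ → E) (m n : ℕ) : (pref u n).take m = pref u (min m n) := by
  simp [pref, ← List.map_take, List.take_range]

lemma pref_getD_length (s : List E) (a : E) : pref (fun i => s.getD i a) s.length = s := by
  apply List.ext_getElem <;> simp +contextual [pref]

lemma forall₂_pref_iff (R : E → F → Prop) (v : ℕ → E) (u : ℕ → F) (n : ℕ) :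
    List.Forall₂ R (pref v n) (pref u n) ↔ ∀ i < n, R (v i) (u i) := by
  simp [pref, List.forall₂_map_left_iff, List.forall₂_map_right_iff, List.forall₂_same]

theorem PrefixClosed.exists_infTrace [Finite E] {T : Set (List E)} (hT : PrefixClosed T)
    (hlen : ∀ n, ∃ s ∈ T, s.length = n) : ∃ v, InfTrace T v := by
  let : TopologicalSpace E := ⊥
  have : DiscreteTopology E := ⟨rfl⟩
  obtain ⟨a⟩ : Nonempty E := by
    obtain ⟨s, -, hs⟩ := hlen 1
    exact ⟨s.head (by rintro rfl; simp at hs)⟩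
  let S : ℕ → Set (ℕ → E) := fun n => {v | pref v n ∈ T}
  have hanti : ∀ n, S (n + 1) ⊆ S n := fun n v hv => hT _ [v n] (pref_succ v n ▸ hv)
  have hne : ∀ n, (S n).Nonempty := by
    intro n
    obtain ⟨s, hs, rfl⟩ := hlen n
    exact ⟨fun i => s.getD i a, show pref _ s.length ∈ T from (pref_getD_length s a).symm ▸ hs⟩
  have hclosed : ∀ n, IsClosed (S n) := by
    intro n
    have hS : S n = (fun v (i : Fin n) => v i) ⁻¹' {f | List.ofFn f ∈ T} := by
      ext v
      simp [S, pref_eq_ofFn]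
    exact hS ▸ (isClosed_discrete _).preimage (by fun_prop)
  obtain ⟨v, hv⟩ := IsCompact.nonempty_iInter_of_sequence_nonempty_isCompact_isClosed
    S hanti hne (hclosed 0).isCompact hclosed
  exact ⟨v, Set.mem_iInter.mp hv⟩

def liftsAlong (T : Set (List E)) (R : E → F → Prop) (u : ℕ → F) : Set (List E) :=
  {s | s ∈ T ∧ List.Forall₂ R s (pref u s.length)}

lemma PrefixClosed.liftsAlong {T : Set (List E)} (hT : PrefixClosed T) (R : E → F → Prop)
    (u : ℕ → F) : PrefixClosed (liftsAlong T R u) := by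
  rintro s t ⟨hst, hrel⟩
  refine ⟨hT s t hst, ?_⟩
  simpa [take_pref] using List.forall₂_take s.length hrel

lemma infTrace_liftsAlong_iff {T : Set (List E)} {R : E → F → Prop} {u : ℕ → F} {v : ℕ → E} :
    InfTrace (liftsAlong T R u) v ↔ InfTrace T v ∧ ∀ i, R (v i) (u i) := by
  simp only [InfTrace, liftsAlong, Set.mem_ofPred_eq, length_pref, forall₂_pref_iff, forall_and]
  refine and_congr_right fun _ => ⟨fun h i => h (i + 1) i i.lt_succ_self, fun h _ i _ => h i⟩

/-- Every infinite trace of a renamed process `P[R]` lifts along the renaming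
relation to an infinite trace of `P`. -/
theorem inft_rename [Fintype E] (TP : Set (List E)) (hP : PrefixClosed TP)
    (R : E → E → Prop) (u : ℕ → E)
    (hu : InfTrace {t | ∃ s ∈ TP, List.Forall₂ R s t} u) :
    ∃ v : ℕ → E, InfTrace TP v ∧ ∀ i, R (v i) (u i) := by
  have hlifts : ∀ n, ∃ s ∈ liftsAlong TP R u, s.length = n := by
    intro n
    obtain ⟨s, hs, hrel⟩ := hu n
    have hlen : s.length = n := by simpa using hrel.length_eq
    exact ⟨s, ⟨hs, hlen ▸ hrel⟩, hlen⟩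
  obtain ⟨v, hv⟩ := (hP.liftsAlong R u).exists_infTrace hlifts
  exact ⟨v, infTrace_liftsAlong_iff.mp hv⟩

end CSPLL
end
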